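/- In the Navigation causal Kripke setting, each of the primitive events (q,w1) = 1, (q,w2) = 1, and (q,w3) = 1 is an actual cause of r = 1 at world w1 by all three HP definitions (original, updated, and modified). -/

import Mathlib

open Classical

noncomputable section

/-- A causal Kripke model `K = (S, W, Rel, F)`: the signature `S` consists of the disjoint
finite sets `Exo` of exogenous and `Endo` of endogenous variables together with a finite
nonempty range `range Γ w` of possible values for each variable `Γ` at each world `w`;
`World` is a finite set of possible worlds, `Rel` is the accessibility relation, and `eqs`
assigns to each endogenous variable `X` and world `w` a structural equation computing the
value of `(X,w)` from the values of all the other variables (it does not depend on the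
coordinate `(X,w)` itself, and its value lies in the range of `(X,w)`). -/
structure CKM where
  Exo : Type
  Endo : Type
  World : Type
  Val : Type
  exoFin : Fintype Exo
  endoFin : Fintype Endo
  worldFin : Fintype World
  Rel : World → World → Prop
  range : (Exo ⊕ Endo) → World → Finset Val
  range_nonempty : ∀ Γ w, (range Γ w).Nonempty
  eqs : Endo → World → (((Exo ⊕ Endo) × World) → Val) → Val
  eqs_mem : ∀ X w g, eqs X w g ∈ range (Sum.inr X) w
  eqs_indep : ∀ X w g g',
    (∀ p, p ≠ (Sum.inr X, w) → g p = g' p) → eqs X w g = eqs X w g'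

namespace CKM

/-- A context assigns to every exogenous variable at every world a value in its range. -/
def ValidContext (K : CKM) (t : K.Exo → K.World → K.Val) : Prop :=
  ∀ U w, t U w ∈ K.range (Sum.inl U) w

/-- `v` is a solution of the causal Kripke setting `(K, t)`: it agrees with the context `t`
on all exogenous variables and satisfies all structural equations. -/
def Solves (K : CKM) (t : K.Exo → K.World → K.Val)
    (v : ((K.Exo ⊕ K.Endo) × K.World) → K.Val) : Prop :=
  (∀ U w, v (Sum.inl U, w) = t U w) ∧ ∀ X w, v (Sum.inr X, w) = K.eqs X w v

/-- The variable `p` influences the (endogenous) variable `q` (i.e. `q` directly causally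
depends on `p`): some change in the value of `p`, keeping all other variables fixed
(within their ranges), changes the value of the structural equation of `q`. -/
def Influences (K : CKM) (p q : (K.Exo ⊕ K.Endo) × K.World) : Prop :=
  ∃ X w, q = (Sum.inr X, w) ∧
    ∃ g g', (∀ r, g r ∈ K.range r.1 r.2) ∧ (∀ r, g' r ∈ K.range r.1 r.2) ∧
      (∀ r, r ≠ p → g r = g' r) ∧ K.eqs X w g ≠ K.eqs X w g'

/-- A causal Kripke model is recursive if it contains no cyclic dependencies. -/
def Recursive (K : CKM) : Prop :=
  ∀ p, ¬ Relation.TransGen K.Influences p p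

/-- The causal Kripke model obtained from `K` by the intervention setting the variables in
`dom` to the values prescribed by `val`. -/
def doInt (K : CKM) (dom : Finset (K.Endo × K.World)) (val : K.Endo × K.World → K.Val) :
    CKM :=
  { K with
    eqs := fun X w g =>
      if (X, w) ∈ dom ∧ val (X, w) ∈ K.range (Sum.inr X) w then val (X, w)
      else K.eqs X w g
    eqs_mem := by
      intro X w g
      by_cases h : (X, w) ∈ dom ∧ val (X, w) ∈ K.range (Sum.inr X) w
      · simp only [if_pos h]; exact h.2
      · simp only [if_neg h]; exact K.eqs_mem X w g
    eqs_indep := by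
      intro X w g g' hgg'
      by_cases h : (X, w) ∈ dom ∧ val (X, w) ∈ K.range (Sum.inr X) w
      · simp only [if_pos h]
      · simp only [if_neg h]; exact K.eqs_indep X w g g' hgg' }

end CKM

/-- Events (modal-Boolean combinations of primitive events): primitive events `X = x` and
`(X,w) = x`, negation, conjunction and the modal operator `□`. -/
inductive Event (E W V : Type) : Type
  | eq : E → V → Event E W V
  | eqAt : E → W → V → Event E W V
  | neg : Event E W V → Event E W V
  | conj : Event E W V → Event E W V → Event E W V
  | box : Event E W V → Event E W V

namespace CKM

/-- Satisfaction of an event at a world of `K`, relative to a solution `v` of the setting. -/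
def SatE (K : CKM) (v : ((K.Exo ⊕ K.Endo) × K.World) → K.Val) :
    K.World → Event K.Endo K.World K.Val → Prop
  | w, .eq X x => v (Sum.inr X, w) = x
  | _, .eqAt X w' x => v (Sum.inr X, w') = x
  | w, .neg α => ¬ SatE K v w α
  | w, .conj α β => SatE K v w α ∧ SatE K v w β
  | w, .box α => ∀ w', K.Rel w w' → SatE K v w' α

/-- `(K,t,w) ⊩ [dom ← val] α` : the event `α` holds at `w` in the model obtained from the
intervention `dom ← val`, in the context `t`. -/
def SatI (K : CKM) (t : K.Exo → K.World → K.Val) (dom : Finset (K.Endo × K.World))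
    (val : K.Endo × K.World → K.Val) (w : K.World) (α : Event K.Endo K.World K.Val) :
    Prop :=
  ∀ v, (K.doInt dom val).Solves t v → (K.doInt dom val).SatE v w α

/-- AC1 : `α` actually holds at `w`, and each conjunct `(X_i, w_j) = y_ij` of `Y = y`
actually holds. -/
def AC1 (K : CKM) (t : K.Exo → K.World → K.Val) (w : K.World)
    (Y : Finset (K.Endo × K.World)) (y : K.Endo × K.World → K.Val)
    (α : Event K.Endo K.World K.Val) : Prop :=
  ∀ v, K.Solves t v → K.SatE v w α ∧ ∀ p ∈ Y, v (Sum.inr p.1, p.2) = y p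

/-- AC2a together with AC2bᵒ (they share the partition `Z`, `N` and the setting `n`):
there is a partition of the endogenous variables into `Z ⊇ Y` and `N` and settings `y'`
of `Y` and `n` of `N` such that `(K,t,w) ⊩ [Y ← y', N ← n] ¬α`, and, where `z*` are the
actual values of the variables of `Z`, for every subset `Z'` of `Z \ Y`,
`(K,t,w) ⊩ [Y ← y, N ← n, Z' ← z'*] α`. -/
def AC2o (K : CKM) (t : K.Exo → K.World → K.Val) (w : K.World)
    (Y : Finset (K.Endo × K.World)) (y : K.Endo × K.World → K.Val)
    (α : Event K.Endo K.World K.Val) : Prop :=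
  ∃ Z N : Finset (K.Endo × K.World), ∃ y' n : K.Endo × K.World → K.Val,
    Y ⊆ Z ∧ Disjoint Z N ∧ (∀ p : K.Endo × K.World, p ∈ Z ∨ p ∈ N) ∧
    (∀ p ∈ Y, y' p ∈ K.range (Sum.inr p.1) p.2) ∧
    (∀ p ∈ N, n p ∈ K.range (Sum.inr p.1) p.2) ∧
    K.SatI t (Y ∪ N) (fun p => if p ∈ Y then y' p else n p) w (.neg α) ∧
    ∀ v, K.Solves t v → ∀ Z' ⊆ Z \ Y,
      K.SatI t (Y ∪ N ∪ Z')
        (fun p => if p ∈ Y then y p else if p ∈ N then n p else v (Sum.inr p.1, p.2)) w α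

/-- AC2a together with AC2bᵘ (updated definition): as in `AC2o`, but moreover the
restoration of the actual values `z'*` must keep `α` true for every subset `N'` of `N`. -/
def AC2u (K : CKM) (t : K.Exo → K.World → K.Val) (w : K.World)
    (Y : Finset (K.Endo × K.World)) (y : K.Endo × K.World → K.Val)
    (α : Event K.Endo K.World K.Val) : Prop :=
  ∃ Z N : Finset (K.Endo × K.World), ∃ y' n : K.Endo × K.World → K.Val,
    Y ⊆ Z ∧ Disjoint Z N ∧ (∀ p : K.Endo × K.World, p ∈ Z ∨ p ∈ N) ∧
    (∀ p ∈ Y, y' p ∈ K.range (Sum.inr p.1) p.2) ∧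
    (∀ p ∈ N, n p ∈ K.range (Sum.inr p.1) p.2) ∧
    K.SatI t (Y ∪ N) (fun p => if p ∈ Y then y' p else n p) w (.neg α) ∧
    ∀ v, K.Solves t v → ∀ Z' ⊆ Z \ Y, ∀ N' ⊆ N,
      K.SatI t (Y ∪ N' ∪ Z')
        (fun p => if p ∈ Y then y p else if p ∈ N' then n p else v (Sum.inr p.1, p.2)) w α

/-- AC2aᵐ (modified definition): there are a set `N` of endogenous variables and a setting
`y'` of the variables in `Y` such that, where `n*` are the actual values of the variables
in `N`, `(K,t,w) ⊩ [Y ← y', N ← n*] ¬α`. -/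
def AC2m (K : CKM) (t : K.Exo → K.World → K.Val) (w : K.World)
    (Y : Finset (K.Endo × K.World)) (y : K.Endo × K.World → K.Val)
    (α : Event K.Endo K.World K.Val) : Prop :=
  ∃ N : Finset (K.Endo × K.World), ∃ y' : K.Endo × K.World → K.Val,
    (∀ p ∈ Y, y' p ∈ K.range (Sum.inr p.1) p.2) ∧
    ∀ v, K.Solves t v →
      K.SatI t (Y ∪ N)
        (fun p => if p ∈ Y then y' p else v (Sum.inr p.1, p.2)) w (.neg α)

/-- `Y = y` is an actual cause of `α` in `(K,t)` at `w` by the ORIGINAL HP definition. -/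
def IsCauseO (K : CKM) (t : K.Exo → K.World → K.Val) (w : K.World)
    (Y : Finset (K.Endo × K.World)) (y : K.Endo × K.World → K.Val)
    (α : Event K.Endo K.World K.Val) : Prop :=
  K.AC1 t w Y y α ∧ K.AC2o t w Y y α ∧
    ∀ Y' ⊂ Y, ∀ y'' : K.Endo × K.World → K.Val,
      ¬ (K.AC1 t w Y' y'' α ∧ K.AC2o t w Y' y'' α)

/-- `Y = y` is an actual cause of `α` in `(K,t)` at `w` by the UPDATED HP definition. -/
def IsCauseU (K : CKM) (t : K.Exo → K.World → K.Val) (w : K.World)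
    (Y : Finset (K.Endo × K.World)) (y : K.Endo × K.World → K.Val)
    (α : Event K.Endo K.World K.Val) : Prop :=
  K.AC1 t w Y y α ∧ K.AC2u t w Y y α ∧
    ∀ Y' ⊂ Y, ∀ y'' : K.Endo × K.World → K.Val,
      ¬ (K.AC1 t w Y' y'' α ∧ K.AC2u t w Y' y'' α)

/-- `Y = y` is an actual cause of `α` in `(K,t)` at `w` by the MODIFIED HP definition. -/
def IsCauseM (K : CKM) (t : K.Exo → K.World → K.Val) (w : K.World)
    (Y : Finset (K.Endo × K.World)) (y : K.Endo × K.World → K.Val)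
    (α : Event K.Endo K.World K.Val) : Prop :=
  K.AC1 t w Y y α ∧ K.AC2m t w Y y α ∧
    ∀ Y' ⊂ Y, ∀ y'' : K.Endo × K.World → K.Val,
      ¬ (K.AC1 t w Y' y'' α ∧ K.AC2m t w Y' y'' α)

/-- `(X,w) = x` is part of a cause of `α` in `(K,t)` at `w'` by the original HP
definition: it is a conjunct of some actual cause `Y = y` of `α` at `w'`. -/
def PartOfCauseO (K : CKM) (t : K.Exo → K.World → K.Val) (w' : K.World)
    (X : K.Endo) (w : K.World) (x : K.Val) (α : Event K.Endo K.World K.Val) : Prop :=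
  ∃ Y y, K.IsCauseO t w' Y y α ∧ (X, w) ∈ Y ∧ y (X, w) = x

/-- `(X,w) = x` is part of a cause of `α` in `(K,t)` at `w'` by the updated HP
definition. -/
def PartOfCauseU (K : CKM) (t : K.Exo → K.World → K.Val) (w' : K.World)
    (X : K.Endo) (w : K.World) (x : K.Val) (α : Event K.Endo K.World K.Val) : Prop :=
  ∃ Y y, K.IsCauseU t w' Y y α ∧ (X, w) ∈ Y ∧ y (X, w) = x

/-- `(X,w) = x` is part of a cause of `α` in `(K,t)` at `w'` by the modified HP
definition. -/
def PartOfCauseM (K : CKM) (t : K.Exo → K.World → K.Val) (w' : K.World)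
    (X : K.Endo) (w : K.World) (x : K.Val) (α : Event K.Endo K.World K.Val) : Prop :=
  ∃ Y y, K.IsCauseM t w' Y y α ∧ (X, w) ∈ Y ∧ y (X, w) = x

end CKM

/-- `Y = y` is an actual cause of `α` in `(K,t)` at `w` by all three HP definitions
(original, updated, and modified). -/
def CKM.IsCauseAll (K : CKM) (t : K.Exo → K.World → K.Val) (w : K.World)
    (Y : Finset (K.Endo × K.World)) (y : K.Endo × K.World → K.Val)
    (α : Event K.Endo K.World K.Val) : Prop :=
  K.IsCauseO t w Y y α ∧ K.IsCauseU t w Y y α ∧ K.IsCauseM t w Y y α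

/-- Exogenous variables of the Navigation example: `U = (U1, U2, U3, U4)`. -/
inductive NavExo : Type
  | u1 | u2 | u3 | u4
deriving DecidableEq

instance : Fintype NavExo :=
  ⟨{NavExo.u1, NavExo.u2, NavExo.u3, NavExo.u4}, fun x => by cases x <;> simp⟩

/-- Endogenous variables of the Navigation example: `pB`, `pC`, `pD` = "the current
location of Alice is B (resp. C, D)", `q` = "point A is to the east of Alice's current
location", `r` = "Alice moves to the east". -/
inductive NavEndo : Type
  | pB | pC | pD | q | r
deriving DecidableEq

instance : Fintype NavEndo :=
  ⟨{NavEndo.pB, NavEndo.pC, NavEndo.pD, NavEndo.q, NavEndo.r}, fun x => by cases x <;> simp⟩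

/-- The Navigation causal Kripke model: worlds `w1, w2, w3` (as `Fin 3`), total
accessibility relation `Rel = W × W`, binary variables with `(pB,w) = (U1,w)`,
`(pC,w) = (U2,w)`, `(pD,w) = (U3,w)`, `(q,w) = (U4,w)` and `r = □q` at every world. -/
@[reducible] def navigation : CKM where
  Exo := NavExo
  Endo := NavEndo
  World := Fin 3
  Val := Bool
  exoFin := inferInstance
  endoFin := inferInstance
  worldFin := inferInstance
  Rel := fun _ _ => True
  range := fun _ _ => Finset.univ
  range_nonempty := fun _ _ => ⟨true, Finset.mem_univ _⟩
  eqs := fun X w g =>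
    match X with
    | .pB => g (Sum.inl NavExo.u1, w)
    | .pC => g (Sum.inl NavExo.u2, w)
    | .pD => g (Sum.inl NavExo.u3, w)
    | .q => g (Sum.inl NavExo.u4, w)
    | .r =>
        if ∀ w' : Fin 3, g (Sum.inr NavEndo.q, w') = true then true else false
  eqs_mem := fun _ _ _ => Finset.mem_univ _
  eqs_indep := by
    intro X w g g' h
    cases X with
    | pB => exact h (Sum.inl NavExo.u1, w) (by simp)
    | pC => exact h (Sum.inl NavExo.u2, w) (by simp)
    | pD => exact h (Sum.inl NavExo.u3, w) (by simp)
    | q => exact h (Sum.inl NavExo.u4, w) (by simp)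
    | r =>
      have hq : ∀ w' : Fin 3, g (Sum.inr NavEndo.q, w') = g' (Sum.inr NavEndo.q, w') :=
        fun w' => h _ (by simp)
      simp only [hq]

/-- The context of the Navigation example: `U = (U1,U2,U3,U4)` is set to `(1,0,0,1)` at
`w1`, `(0,1,0,1)` at `w2` and `(0,0,1,1)` at `w3`. -/
def navigationCtx : NavExo → Fin 3 → Bool := fun U w =>
  match U with
  | NavExo.u1 => decide (w = 0)
  | NavExo.u2 => decide (w = 1)
  | NavExo.u3 => decide (w = 2)
  | NavExo.u4 => true

/-! Every world sees every world, so `r = □q` is `1` at `w1` exactly when `q` is `1` at all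
three worlds, and `q = U4 = 1` everywhere. Setting one `(q, wᵢ)` to `0` therefore falsifies
`r = 1` at `w1`, while setting it back to `1` and freezing any other variables at their actual
values keeps it true. For a singleton cause minimality only has to rule out the empty cause:
with `Y = ∅`, AC2a and AC2bᵒ demand that one intervention `N ← n` make `r = 1` both false and
true, and AC2aᵐ demands that freezing `N` at its actual values falsify it, although the actual
world is a solution of that intervention. -/

namespace CKM

variable {K : CKM} {t : K.Exo → K.World → K.Val} {w : K.World}
  {dom : Finset (K.Endo × K.World)} {val val' : K.Endo × K.World → K.Val}
  {v : (K.Exo ⊕ K.Endo) × K.World → K.Val} {Y : Finset (K.Endo × K.World)}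
  {y : K.Endo × K.World → K.Val} {α : Event K.Endo K.World K.Val}

theorem satE_doInt (dom : Finset (K.Endo × K.World)) (val : K.Endo × K.World → K.Val)
    (v : (K.Exo ⊕ K.Endo) × K.World → K.Val) (w : K.World) (α : Event K.Endo K.World K.Val) :
    (K.doInt dom val).SatE v w α ↔ K.SatE v w α := by
  induction α generalizing w with
  | eq | eqAt => rfl
  | neg α ih => exact not_congr (ih w)
  | conj α β ihα ihβ => exact and_congr (ihα w) (ihβ w)
  | box α ih => exact forall₂_congr fun w' _ => ih w'

theorem doInt_eqs_congr (h : ∀ p ∈ dom, val p = val' p) (X : K.Endo) (w : K.World)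
    (g : (K.Exo ⊕ K.Endo) × K.World → K.Val) :
    (K.doInt dom val).eqs X w g = (K.doInt dom val').eqs X w g := by
  by_cases hX : (X, w) ∈ dom
  · simp [doInt, hX, h _ hX]
  · simp [doInt, hX]

theorem satI_congr (h : ∀ p ∈ dom, val p = val' p) (w : K.World)
    (α : Event K.Endo K.World K.Val) : K.SatI t dom val w α ↔ K.SatI t dom val' w α := by
  refine forall_congr' fun v => imp_congr ?_
    ((satE_doInt (K := K) dom val v w α).trans (satE_doInt dom val' v w α).symm)
  exact ⟨fun hv => ⟨hv.1, fun X w => (hv.2 X w).trans (doInt_eqs_congr h X w v)⟩,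
    fun hv => ⟨hv.1, fun X w => (hv.2 X w).trans (doInt_eqs_congr h X w v).symm⟩⟩

theorem solves_doInt_empty (val : K.Endo × K.World → K.Val) :
    (K.doInt ∅ val).Solves t v ↔ K.Solves t v :=
  and_congr Iff.rfl (forall₂_congr fun X w => by simp [doInt])

theorem Solves.doInt_actual (hv : K.Solves t v) (N : Finset (K.Endo × K.World)) :
    (K.doInt N fun p => v (Sum.inr p.1, p.2)).Solves t v := by
  refine ⟨hv.1, fun X w => ?_⟩
  show v _ = ite _ _ _
  split_ifs
  · rfl
  · exact hv.2 X w

theorem AC2u.toAC2o (h : K.AC2u t w Y y α) : K.AC2o t w Y y α := by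
  obtain ⟨Z, N, y', n, hYZ, hZN, hcover, hy', hn, hneg, hpos⟩ := h
  exact ⟨Z, N, y', n, hYZ, hZN, hcover, hy', hn, hneg,
    fun v hv Z' hZ' => hpos v hv Z' hZ' N subset_rfl⟩

/-- With `Y = ∅`, AC2a and AC2bᵒ ask the single intervention `N ← n` to make `α` both false
and true, which is impossible once that intervention has a solution. -/
theorem not_AC2o_empty (hv : K.Solves t v) (hsol : ∀ N n, ∃ u, (K.doInt N n).Solves t u) :
    ¬ K.AC2o t w ∅ y α := by
  rintro ⟨_, N, _, n, -, -, -, -, -, hneg, hpos⟩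
  have hα := hpos v hv ∅ (Finset.empty_subset _)
  simp only [Finset.empty_union, Finset.union_empty] at hneg hα
  rw [satI_congr (val' := n) (fun p hp => by simp [hp])] at hneg hα
  obtain ⟨u, hu⟩ := hsol N n
  exact hneg u hu (hα u hu)

theorem not_AC2m_empty (hv : K.Solves t v) (hα : K.SatE v w α) : ¬ K.AC2m t w ∅ y α := by
  rintro ⟨N, y', _, hneg⟩
  have hnα := hneg v hv
  rw [Finset.empty_union, satI_congr (val' := fun p => v (Sum.inr p.1, p.2))
    (fun p _ => by simp)] at hnα
  exact (satE_doInt _ _ v w (.neg α)).1 (hnα v (hv.doInt_actual N)) hα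

theorem isCauseAll_singleton {p : K.Endo × K.World} (hv : K.Solves t v)
    (hsol : ∀ N n, ∃ u, (K.doInt N n).Solves t u) (h1 : K.AC1 t w {p} y α)
    (h2u : K.AC2u t w {p} y α) (h2m : K.AC2m t w {p} y α) : K.IsCauseAll t w {p} y α := by
  have hα := (h1 v hv).1
  refine ⟨⟨h1, h2u.toAC2o, ?_⟩, ⟨h1, h2u, ?_⟩, ⟨h1, h2m, ?_⟩⟩ <;>
    rintro Y' hY' y'' ⟨-, h2⟩ <;> rw [Finset.ssubset_singleton_iff.1 hY'] at h2
  · exact not_AC2o_empty hv hsol h2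
  · exact not_AC2o_empty hv hsol h2.toAC2o
  · exact not_AC2m_empty hv hα h2

end CKM

namespace Navigation

open NavEndo

variable {dom : Finset (NavEndo × Fin 3)} {val : NavEndo × Fin 3 → Bool}
  {u : (NavExo ⊕ NavEndo) × Fin 3 → Bool}

theorem solves_doInt_iff :
    (navigation.doInt dom val).Solves navigationCtx u ↔
      (∀ U w, u (Sum.inl U, w) = navigationCtx U w) ∧
        ∀ X w, u (Sum.inr X, w) =
          if (X, w) ∈ dom then val (X, w) else navigation.eqs X w u := by
  simp [CKM.Solves, CKM.doInt]

theorem solves_q (hu : (navigation.doInt dom val).Solves navigationCtx u) (w : Fin 3) :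
    u (Sum.inr q, w) = if (q, w) ∈ dom then val (q, w) else true := by
  obtain ⟨hexo, hendo⟩ := solves_doInt_iff.1 hu
  rw [hendo q w]
  exact if_congr Iff.rfl rfl (hexo NavExo.u4 w)

theorem solves_r (hu : (navigation.doInt dom val).Solves navigationCtx u) (w : Fin 3) :
    u (Sum.inr r, w) = if (r, w) ∈ dom then val (r, w)
      else if ∀ w' : Fin 3, u (Sum.inr q, w') = true then true else false :=
  (solves_doInt_iff.1 hu).2 r w

theorem r_eq_false {i w : Fin 3} (hq : (q, i) ∈ dom) (hval : val (q, i) = false)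
    (hr : (r, w) ∉ dom) (hu : (navigation.doInt dom val).Solves navigationCtx u) :
    u (Sum.inr r, w) = false := by
  have hqi : u (Sum.inr q, i) = false := by rw [solves_q hu i, if_pos hq, hval]
  rw [solves_r hu w, if_neg hr, if_neg fun hall => by simpa [hqi] using hall i]

theorem r_eq_true {w : Fin 3} (hq : ∀ w', (q, w') ∈ dom → val (q, w') = true)
    (hr : (r, w) ∈ dom → val (r, w) = true)
    (hu : (navigation.doInt dom val).Solves navigationCtx u) :
    u (Sum.inr r, w) = true := by
  have hall : ∀ w', u (Sum.inr q, w') = true := fun w' => by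
    rw [solves_q hu w']
    split_ifs with h
    exacts [hq w' h, rfl]
  rw [solves_r hu w]
  split_ifs with h
  exacts [hr h, rfl]

theorem actual_q {v : (NavExo ⊕ NavEndo) × Fin 3 → Bool}
    (hv : navigation.Solves navigationCtx v) (w : Fin 3) : v (Sum.inr q, w) = true := by
  simpa using solves_q ((CKM.solves_doInt_empty fun _ => true).2 hv) w

theorem actual_r {v : (NavExo ⊕ NavEndo) × Fin 3 → Bool}
    (hv : navigation.Solves navigationCtx v) (w : Fin 3) : v (Sum.inr r, w) = true :=
  r_eq_true (by simp) (by simp) ((CKM.solves_doInt_empty fun _ => true).2 hv)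

def sol (dom : Finset (NavEndo × Fin 3)) (val : NavEndo × Fin 3 → Bool) :
    (NavExo ⊕ NavEndo) × Fin 3 → Bool
  | (Sum.inl U, w) => navigationCtx U w
  | (Sum.inr X, w) =>
    if (X, w) ∈ dom then val (X, w) else
    match X with
    | pB => navigationCtx NavExo.u1 w
    | pC => navigationCtx NavExo.u2 w
    | pD => navigationCtx NavExo.u3 w
    | q => true
    | r => if ∀ w' : Fin 3, (if (q, w') ∈ dom then val (q, w') else true) = true then true
        else false

theorem sol_solves (dom : Finset (NavEndo × Fin 3)) (val : NavEndo × Fin 3 → Bool) :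
    (navigation.doInt dom val).Solves navigationCtx (sol dom val) := by
  refine solves_doInt_iff.2 ⟨fun U w => rfl, fun X w => ?_⟩
  by_cases h : (X, w) ∈ dom
  · simp [sol, h]
  · cases X <;> simp [sol, h, navigationCtx]

theorem AC1_q (i : Fin 3) :
    navigation.AC1 navigationCtx 0 {(q, i)} (fun _ => true) (.eq r true) := fun _ hv =>
  ⟨actual_r hv 0, fun _ hp => (Finset.mem_singleton.1 hp) ▸ actual_q hv i⟩

theorem AC2u_q (i : Fin 3) :
    navigation.AC2u navigationCtx 0 {(q, i)} (fun _ => true) (.eq r true) := by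
  refine ⟨Finset.univ, ∅, fun _ => false, fun _ => true, Finset.subset_univ _,
    Finset.disjoint_empty_right _, fun p => Or.inl (Finset.mem_univ p),
    fun _ _ => Finset.mem_univ _, fun _ _ => Finset.mem_univ _,
    fun u hu => Bool.eq_false_iff.1 (r_eq_false (i := i) (by simp) (by simp) (by simp) hu), ?_⟩
  intro v hv _ _ _ _ u hu
  refine r_eq_true (fun w' _ => ?_) (fun _ => ?_) hu
  · split_ifs <;> first | rfl | exact actual_q hv w'
  · split_ifs <;> first | rfl | exact actual_r hv 0

theorem AC2m_q (i : Fin 3) :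
    navigation.AC2m navigationCtx 0 {(q, i)} (fun _ => true) (.eq r true) :=
  ⟨∅, fun _ => false, fun _ _ => Finset.mem_univ _, fun _ _ u hu =>
    Bool.eq_false_iff.1 (r_eq_false (i := i) (by simp) (by simp) (by simp) hu)⟩

end Navigation

/-- In the Navigation causal Kripke setting, each of the primitive
events `(q,w1) = 1`, `(q,w2) = 1`, and `(q,w3) = 1` is an actual cause of `r = 1` at
world `w1` by all three HP definitions (original, updated, and modified). -/
theorem navigation_causes :
    navigation.IsCauseAll navigationCtx 0 {(NavEndo.q, (0 : Fin 3))} (fun _ => true)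
      (Event.eq NavEndo.r true) ∧
    navigation.IsCauseAll navigationCtx 0 {(NavEndo.q, (1 : Fin 3))} (fun _ => true)
      (Event.eq NavEndo.r true) ∧
    navigation.IsCauseAll navigationCtx 0 {(NavEndo.q, (2 : Fin 3))} (fun _ => true)
      (Event.eq NavEndo.r true) := by
  have hactual : navigation.Solves navigationCtx (Navigation.sol ∅ fun _ => true) :=
    (CKM.solves_doInt_empty _).1 (Navigation.sol_solves ∅ _)
  have hsol : ∀ N n, ∃ u, (navigation.doInt N n).Solves navigationCtx u :=
    fun N n => ⟨_, Navigation.sol_solves N n⟩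
  have hcause (i : Fin 3) := CKM.isCauseAll_singleton hactual hsol (Navigation.AC1_q i)
    (Navigation.AC2u_q i) (Navigation.AC2m_q i)
  exact ⟨hcause 0, hcause 1, hcause 2⟩
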